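/- If D is a finite-dimensional division algebra over a field k and the category of finite-dimensional D-modules is equivalent (as a k-linear category) to the category of finite-dimensional k-vector spaces, then D is isomorphic to k as a k-algebra. -/

import Mathlib

open CategoryTheory

/-- Scaling of a `D`-linear map by a scalar `a : k`, for `D` a `k`-algebra (so that `k`
maps into the center of `D`). -/
def kSMulHomMod (k D : Type) [Field k] [DivisionRing D] [Algebra k D]
    {X Y : ModuleCat D} (a : k) (f : X ⟶ Y) : X ⟶ Y :=
  ModuleCat.ofHom (LinearMap.mk
    (AddHom.mk (fun x => algebraMap k D a • f x)
      (by intro x y; simp [map_add, smul_add]))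
    (by
      intro d x
      simp only [map_smul, RingHom.id_apply]
      rw [smul_smul, smul_smul, Algebra.commutes]) : X →ₗ[D] Y)

/-- The `k`-module structure on hom-sets of `FGModuleCat D`. -/
def kSMulHom (k D : Type) [Field k] [DivisionRing D] [Algebra k D]
    {X Y : FGModuleCat D} (a : k) (f : X ⟶ Y) : X ⟶ Y :=
  ObjectProperty.homMk (kSMulHomMod k D (X := X.obj) (Y := Y.obj) a f.hom)

/-!
Right multiplications identify `D` with the (opposite) endomorphism ring of the module `D`, and
the equivalence carries this `k`-linearly and bijectively onto `End_k W`, where `W` is the image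
of `D`. So every nonzero endomorphism of `W` is invertible. The rank-one map `w ↦ φ w • v` is
injective only if `dim W ≤ 1`, hence `dim_k D = (dim W)² ≤ 1` and `k → D` is an isomorphism.
-/

open Module FGModuleCat

universe u v

theorem Module.finrank_le_one_of_forall_ne_zero_injective {K V : Type*} [Field K]
    [AddCommGroup V] [Module K V]
    (h : ∀ f : Module.End K V, f ≠ 0 → Function.Injective f) : finrank K V ≤ 1 := by
  rcases subsingleton_or_nontrivial V with hV | hV
  · simp [finrank_zero_of_subsingleton]
  obtain ⟨v, hv⟩ := exists_ne (0 : V)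
  obtain ⟨φ, hφ⟩ := Projective.exists_dual_ne_zero K hv
  have hf : LinearMap.toSpanSingleton K V v ∘ₗ φ ≠ 0 := fun h0 =>
    smul_ne_zero hφ hv (by simpa using LinearMap.congr_fun h0 v)
  have hφ_inj : Function.Injective φ := by
    have hinj := h _ hf
    rw [LinearMap.coe_comp] at hinj
    exact hinj.of_comp
  simpa using LinearMap.finrank_le_finrank_of_injective hφ_inj

namespace FGModuleCat

variable {R : Type*} [Ring R]

def rightMul (r : R) : of R (ULift.{u} R) ⟶ of R (ULift.{u} R) :=
  ofHom
    { toFun x := ⟨x.down * r⟩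
      map_add' x y := ULift.ext _ _ (add_mul x.down y.down r)
      map_smul' c x := ULift.ext _ _ (mul_assoc c x.down r) }

lemma rightMul_one : rightMul.{u} (1 : R) = 𝟙 _ :=
  hom_ext <| LinearMap.ext fun x => ULift.ext _ _ (mul_one x.down)

lemma rightMul_mul (r s : R) : rightMul.{u} (r * s) = rightMul r ≫ rightMul s :=
  hom_ext <| LinearMap.ext fun x => ULift.ext _ _ (mul_assoc x.down r s).symm

lemma rightMul_add (r s : R) : rightMul.{u} (r + s) = rightMul r + rightMul s :=
  hom_ext <| LinearMap.ext fun x => ULift.ext _ _ (mul_add x.down r s)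

lemma rightMul_bijective : Function.Bijective (rightMul.{u} (R := R)) := by
  refine ⟨fun r s h => ?_, fun f => ⟨(f.hom.hom ⟨1⟩).down, ?_⟩⟩
  · have h₁ : 1 * r = 1 * s := congrArg (fun g => (g.hom.hom ⟨1⟩).down) h
    simpa using h₁
  · refine hom_ext <| LinearMap.ext fun x => ULift.ext _ _ ?_
    have hx : x = x.down • (⟨1⟩ : ULift R) := ULift.ext _ _ (mul_one _).symm
    show x.down * (f.hom.hom ⟨1⟩).down = (f.hom.hom x).down
    conv_rhs => rw [hx, map_smul]
    rfl

end FGModuleCat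

variable {k D : Type} [Field k] [DivisionRing D] [Algebra k D]

@[simp]
lemma kSMulHom_one {X Y : FGModuleCat D} (f : X ⟶ Y) : kSMulHom k D 1 f = f := by
  ext x
  simp [kSMulHom, kSMulHomMod]

lemma FGModuleCat.rightMul_smul (a : k) (d : D) :
    rightMul.{u} (a • d) = kSMulHom k D a (rightMul d) :=
  hom_ext <| LinearMap.ext fun x => ULift.ext _ _ <| by
    show x.down * (a • d) = algebraMap k D a • (x.down * d)
    rw [algebraMap_smul, mul_smul_comm]

variable (k D) in
def IsKLinear (F : FGModuleCat.{u} D ⥤ FGModuleCat.{v} k) : Prop :=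
  ∀ (X Y : FGModuleCat D) (f g : X ⟶ Y) (a : k),
    F.map (kSMulHom k D a f + g) = a • F.map f + F.map g

namespace IsKLinear

variable {F : FGModuleCat.{u} D ⥤ FGModuleCat.{v} k}

lemma map_add (hF : IsKLinear k D F) {X Y : FGModuleCat D} (f g : X ⟶ Y) :
    F.map (f + g) = F.map f + F.map g := by
  simpa using hF X Y f g 1

lemma map_zero (hF : IsKLinear k D F) {X Y : FGModuleCat D} : F.map (0 : X ⟶ Y) = 0 := by
  simpa using hF.map_add (0 : X ⟶ Y) 0

lemma map_kSMulHom (hF : IsKLinear k D F) {X Y : FGModuleCat D} (a : k) (f : X ⟶ Y) :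
    F.map (kSMulHom k D a f) = a • F.map f := by
  simpa [hF.map_zero] using hF X Y f 0 a

def rightMulEnd (hF : IsKLinear k D F) : D →ₗ[k] Module.End k (F.obj (of D (ULift.{u} D))) where
  toFun d := (F.map (rightMul d)).hom.hom
  map_add' d₁ d₂ := by rw [rightMul_add, hF.map_add]; rfl
  map_smul' a d := by rw [rightMul_smul, hF.map_kSMulHom]; rfl

lemma rightMulEnd_one (hF : IsKLinear k D F) : hF.rightMulEnd 1 = 1 := by
  show (F.map (rightMul 1)).hom.hom = LinearMap.id
  rw [rightMul_one, F.map_id]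
  rfl

lemma rightMulEnd_mul (hF : IsKLinear k D F) (d₁ d₂ : D) :
    hF.rightMulEnd (d₁ * d₂) = hF.rightMulEnd d₂ * hF.rightMulEnd d₁ := by
  show (F.map (rightMul (d₁ * d₂))).hom.hom = _
  rw [rightMul_mul, F.map_comp]
  rfl

lemma rightMulEnd_bijective [F.Full] [F.Faithful] (hF : IsKLinear k D F) :
    Function.Bijective hF.rightMulEnd := by
  have hom_bijective : Function.Bijective
      fun f : F.obj (of D (ULift.{u} D)) ⟶ F.obj (of D (ULift.{u} D)) => f.hom.hom :=
    ⟨fun _ _ h => hom_ext h, fun g => ⟨ObjectProperty.homMk (ModuleCat.ofHom g), rfl⟩⟩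
  have map_bijective : Function.Bijective (F.map (X := of D (ULift.{u} D)) (Y := of D (ULift.{u} D))) :=
    ⟨F.map_injective, F.map_surjective⟩
  exact hom_bijective.comp (map_bijective.comp rightMul_bijective)

lemma injective_of_ne_zero [F.Full] [F.Faithful] (hF : IsKLinear k D F)
    {f : Module.End k (F.obj (of D (ULift.{u} D)))} (hf : f ≠ 0) : Function.Injective f := by
  obtain ⟨d, rfl⟩ := hF.rightMulEnd_bijective.2 f
  have hd : d ≠ 0 := by
    rintro rfl
    exact hf hF.rightMulEnd.map_zero
  have hinv : hF.rightMulEnd d⁻¹ * hF.rightMulEnd d = 1 := by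
    rw [← rightMulEnd_mul, mul_inv_cancel₀ hd, rightMulEnd_one]
  exact Function.LeftInverse.injective (g := hF.rightMulEnd d⁻¹) (LinearMap.congr_fun hinv)

lemma finrank_le_one [F.Full] [F.Faithful] (hF : IsKLinear k D F) : finrank k D ≤ 1 := by
  have hW := Module.finrank_le_one_of_forall_ne_zero_injective fun _ => hF.injective_of_ne_zero
  rw [(LinearEquiv.ofBijective _ hF.rightMulEnd_bijective).finrank_eq, finrank_linearMap]
  nlinarith

end IsKLinear

/-- If the category of finite-dimensional modules over a finite-dimensional division
`k`-algebra `D` is `k`-linearly equivalent to the category of finite-dimensional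
`k`-vector spaces, then `D ≅ k` as `k`-algebras. -/
theorem division_algebra_of_k_linear_equivalence
    (k D : Type) [Field k] [DivisionRing D] [Algebra k D] [FiniteDimensional k D]
    (e : FGModuleCat D ≌ FGModuleCat k)
    (hlin : ∀ (X Y : FGModuleCat D) (f g : X ⟶ Y) (a : k),
      e.functor.map (kSMulHom k D a f + g) = a • e.functor.map f + e.functor.map g) :
    Nonempty (D ≃ₐ[k] k) := by
  have hD : finrank k D = 1 := le_antisymm (IsKLinear.finrank_le_one hlin) finrank_pos
  exact ⟨(AlgEquiv.ofBijective (Algebra.ofId k D)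
    (Free.bijective_algebraMap_of_finrank_eq_one hD)).symm⟩
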